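/- arXiv:2202.07425 — 2 statements merged into one kernel-verified Lean document; each statement's English description precedes it below -/
import Mathlib

section
/- Let m ∈ ℕ (m ≥ 1). Then for every x ≥ 1, Φ(x) < 1/(2(1 + (x−1)^{2m})^{(2m+1)/(2m)}). -/
open scoped BigOperators
open Real Filter

/-- The algebraic sigmoid function `φ(x) = x / (1 + x^(2m))^(1/(2m))`. -/
noncomputable def phi (m : ℕ) (x : ℝ) : ℝ :=
  x / (1 + x ^ (2 * m)) ^ ((1 : ℝ) / (2 * m))

/-- The activation function `Φ(x) = (φ(x+1) - φ(x-1))/4`. -/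
noncomputable def Phi (m : ℕ) (x : ℝ) : ℝ :=
  (phi m (x + 1) - phi m (x - 1)) / 4

/-!
By the mean value theorem, `Φ(x) = φ'(c) / 2` for some `c ∈ (x - 1, x + 1)`, and
`φ'(t) = (1 + t^(2m))^(-(2m+1)/(2m))`. This is strictly decreasing on `[0, ∞)`, so for `x ≥ 1`
we get `φ'(c) < φ'(x - 1)`, which is twice the claimed bound.
-/

noncomputable def phiDeriv (m : ℕ) (x : ℝ) : ℝ :=
  (1 + x ^ (2 * m)) ^ (-(2 * (m : ℝ) + 1) / (2 * m))

lemma one_add_pow_two_mul_pos (m : ℕ) (x : ℝ) : 0 < 1 + x ^ (2 * m) := by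
  have := Even.pow_nonneg (even_two_mul m) x
  linarith

lemma phi_eq_mul_rpow_neg (m : ℕ) (x : ℝ) :
    phi m x = x * (1 + x ^ (2 * m)) ^ (-((1 : ℝ) / (2 * m))) := by
  rw [phi, rpow_neg (one_add_pow_two_mul_pos m x).le, div_eq_mul_inv]

lemma hasDerivAt_phi {m : ℕ} (hm : m ≠ 0) (x : ℝ) : HasDerivAt (phi m) (phiDeriv m x) x := by
  set A := 1 + x ^ (2 * m)
  set p : ℝ := (1 : ℝ) / (2 * m)
  have hA : 0 < A := one_add_pow_two_mul_pos m x
  have hmp : 2 * (m : ℝ) * p = 1 := by simp only [p]; field_simp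
  have hA_deriv : HasDerivAt (fun y : ℝ => 1 + y ^ (2 * m)) ((2 * m : ℕ) * x ^ (2 * m - 1)) x :=
    (hasDerivAt_pow (2 * m) x).const_add 1
  have hd := (hasDerivAt_id x).mul (hA_deriv.rpow_const (p := -p) (Or.inl hA.ne'))
  rw [funext (phi_eq_mul_rpow_neg m)]
  refine hd.congr_deriv ?_
  have hpow : x * x ^ (2 * m - 1) = x ^ (2 * m) := by
    rw [← pow_succ']; congr 1; omega
  have hsplit : A ^ (-p) = A * A ^ (-p - 1) := by
    rw [rpow_sub_one hA.ne']; field_simp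
  have hexp : -(2 * (m : ℝ) + 1) / (2 * m) = -p - 1 := by
    simp only [p]; field_simp; ring
  -- `A^(-p) - 2m p x^(2m) A^(-p-1) = A^(-p-1) (A - x^(2m)) = A^(-p-1)`
  rw [id, one_mul, hsplit, phiDeriv, hexp]
  simp only [A]
  push_cast
  linear_combination (-(A ^ (-p - 1))) * hpow - (x * x ^ (2 * m - 1) * A ^ (-p - 1)) * hmp

lemma strictAntiOn_phiDeriv {m : ℕ} (hm : m ≠ 0) : StrictAntiOn (phiDeriv m) (Set.Ici 0) := by
  intro s hs t _ hst
  have hneg : -(2 * (m : ℝ) + 1) / (2 * m) < 0 :=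
    div_neg_of_neg_of_pos (by linarith [m.cast_nonneg (α := ℝ)]) (by positivity)
  refine rpow_lt_rpow_of_neg (one_add_pow_two_mul_pos m s) ?_ hneg
  gcongr

lemma exists_Phi_eq_phiDeriv_div_two {m : ℕ} (hm : m ≠ 0) (x : ℝ) :
    ∃ c ∈ Set.Ioo (x - 1) (x + 1), Phi m x = phiDeriv m c / 2 := by
  obtain ⟨c, hc, hslope⟩ := exists_hasDerivAt_eq_slope (phi m) (phiDeriv m)
    (by linarith : x - 1 < x + 1)
    (fun t _ => (hasDerivAt_phi hm t).continuousAt.continuousWithinAt)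
    (fun t _ => hasDerivAt_phi hm t)
  refine ⟨c, hc, ?_⟩
  rw [Phi, hslope]
  ring

theorem Phi_upper_bound (m : ℕ) (hm : 1 ≤ m) :
    ∀ x : ℝ, 1 ≤ x →
      Phi m x < 1 / (2 * (1 + (x - 1) ^ (2 * m)) ^ ((2 * (m : ℝ) + 1) / (2 * m))) := by
  intro x hx
  have hm0 : m ≠ 0 := by omega
  obtain ⟨c, ⟨hxc, _⟩, hPhi⟩ := exists_Phi_eq_phiDeriv_div_two hm0 x
  have hx1 : (0 : ℝ) ≤ x - 1 := by linarith
  calc Phi m x = phiDeriv m c / 2 := hPhi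
    _ < phiDeriv m (x - 1) / 2 := by
        gcongr
        exact strictAntiOn_phiDeriv hm0 hx1 (hx1.trans hxc.le) hxc
    _ = _ := by
        rw [phiDeriv, neg_div, rpow_neg (one_add_pow_two_mul_pos m _).le]
        field_simp
end

section
/- Let (X,‖·‖) be a Banach space, f : ℝ → X continuous and bounded, m ∈ ℕ (m ≥ 1), 0 < α < 1, and n ∈ ℕ with n^{1−α} > 2. Then for every x ∈ ℝ, ‖Ā_n(f,x) − f(x)‖ ≤ ω₁(f, 1/n^α) + ‖f‖_{∞,ℝ}/(2m(n^{1−α} − 2)^{2m}); consequently the same bound holds for sup_{x∈ℝ} ‖Ā_n(f,x) − f(x)‖, and if f is in addition uniformly continuous then Ā_n(f) → f uniformly as n → ∞. -/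
/-!
Since `φ` is odd and increases from `-1` to `1`, the translates `k ↦ Φ(y - k)` are nonnegative and
telescope to a partition of unity, so `Ā_n f x - f x = ∑ₖ Φ(nx - k) (f (k/n) - f x)`. The mass of
`Φ(y - ·)` at distance more than `s` from `y` is at most `1 - φ(s - 1) ≤ 1 / (2m (s - 1)^(2m))`,
by Bernoulli's inequality applied to `1 / φ(t) = (1 + t^(-2m))^(1/(2m))`.

With `ω = ω₁(f, δ)`, `‖f‖ ≤ B` and `a = min ω B`, the increment `‖f (k/n) - f x‖` is at most `ω`
when `|nx - k| ≤ nδ`, at most `min (2ω) (2B) ≤ ω + a` when `nδ < |nx - k| ≤ 2nδ`, and at most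
`2B ≤ ω + a + 2(B - a)` beyond. The tail beyond `2nδ` is four times lighter than the one beyond
`nδ`, and `a + 2(B - a)/4 ≤ B`, so the far terms cost at most `B / (2m (nδ - 1)^(2m))`.
Taking `δ = n^(-α)` gives the estimate; fixing `δ` and letting `n → ∞` gives uniform convergence.
-/

open scoped BigOperators
open Real Filter

/-- First modulus of continuity of `f` on the set `s`, with step `δ`. -/
noncomputable def omega1 {X : Type*} [NormedAddCommGroup X] (f : ℝ → X) (s : Set ℝ)
    (δ : ℝ) : ℝ :=
  sSup {r : ℝ | ∃ x ∈ s, ∃ y ∈ s, |x - y| ≤ δ ∧ r = ‖f x - f y‖}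

/-- Sup norm of `f` over a set `s`. -/
noncomputable def supNorm {X : Type*} [NormedAddCommGroup X] (f : ℝ → X) (s : Set ℝ) : ℝ :=
  ⨆ t : s, ‖f t‖

/-- The neural network operator `A_n` induced by the density `Φ`. -/
noncomputable def An {X : Type*} [NormedAddCommGroup X] [Module ℝ X]
    (m : ℕ) (a b : ℝ) (n : ℕ) (f : ℝ → X) (x : ℝ) : X :=
  (∑ k ∈ Finset.Icc ⌈(n : ℝ) * a⌉ ⌊(n : ℝ) * b⌋, Phi m ((n : ℝ) * x - (k : ℝ)))⁻¹ •
    ∑ k ∈ Finset.Icc ⌈(n : ℝ) * a⌉ ⌊(n : ℝ) * b⌋,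
      Phi m ((n : ℝ) * x - (k : ℝ)) • f ((k : ℝ) / n)

/-- The quasi-interpolation neural network operator `Ā_n`. -/
noncomputable def AnBar {X : Type*} [NormedAddCommGroup X] [Module ℝ X]
    (m : ℕ) (n : ℕ) (f : ℝ → X) (x : ℝ) : X :=
  ∑' k : ℤ, Phi m ((n : ℝ) * x - (k : ℝ)) • f ((k : ℝ) / n)

section Sigmoid

variable {m : ℕ}

lemma phi_neg (m : ℕ) (x : ℝ) : phi m (-x) = -phi m x := by
  rw [phi, phi, (even_two_mul m).neg_pow, neg_div]

lemma phi_zero (m : ℕ) : phi m 0 = 0 := by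
  simp [phi]

lemma phi_denom_pos (m : ℕ) (x : ℝ) : 0 < (1 + x ^ (2 * m)) ^ ((1 : ℝ) / (2 * m)) :=
  rpow_pos_of_pos (by linarith [(even_two_mul m).pow_nonneg x]) _

lemma phi_eq_inv_rpow (hm : 1 ≤ m) {t : ℝ} (ht : 0 < t) :
    phi m t = ((1 + (t ^ (2 * m))⁻¹) ^ ((1 : ℝ) / (2 * m)))⁻¹ := by
  have hA : 0 < t ^ (2 * m) := by positivity
  have ht_eq : (t ^ (2 * m)) ^ ((1 : ℝ) / (2 * m)) = t := by
    rw [show (1 : ℝ) / (2 * m) = ((2 * m : ℕ) : ℝ)⁻¹ by push_cast; ring]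
    exact pow_rpow_inv_natCast ht.le (by omega)
  rw [phi, show 1 + t ^ (2 * m) = t ^ (2 * m) * (1 + (t ^ (2 * m))⁻¹) by field_simp; ring,
    mul_rpow hA.le (by positivity), ht_eq, div_mul_cancel_left₀ ht.ne']

lemma phi_le_one (hm : 1 ≤ m) (x : ℝ) : phi m x ≤ 1 := by
  rcases le_or_gt x 0 with hx | hx
  · exact (div_nonpos_of_nonpos_of_nonneg hx (phi_denom_pos m x).le).trans zero_le_one
  · rw [phi_eq_inv_rpow hm hx]
    exact inv_le_one_of_one_le₀
      (one_le_rpow (le_add_of_nonneg_right (by positivity)) (by positivity))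

lemma phi_monotone (hm : 1 ≤ m) : Monotone (phi m) := by
  refine monotone_of_odd_of_monotoneOn_nonneg (phi_neg m) fun a ha b hb hab => ?_
  rcases (Set.mem_Ici.1 ha).eq_or_lt with rfl | ha
  · rw [phi_zero]
    exact div_nonneg hb (phi_denom_pos m b).le
  · rw [phi_eq_inv_rpow hm ha, phi_eq_inv_rpow hm (ha.trans_le hab)]
    have hb : 0 < b := ha.trans_le hab
    gcongr

lemma one_sub_phi_le (hm : 1 ≤ m) {t : ℝ} (ht : 0 < t) :
    1 - phi m t ≤ 1 / (2 * m * t ^ (2 * m)) := by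
  have hε : 0 ≤ (t ^ (2 * m))⁻¹ := inv_nonneg.2 (pow_pos ht _).le
  have hp0 : (0 : ℝ) ≤ 1 / (2 * m) := by positivity
  have hp1 : (1 : ℝ) / (2 * m) ≤ 1 := by
    rw [div_le_one (by positivity)]
    exact_mod_cast (by omega : 1 ≤ 2 * m)
  have bernoulli := rpow_one_add_le_one_add_mul_self (by linarith) hp0 hp1 (s := (t ^ (2 * m))⁻¹)
  have hone := one_le_rpow (le_add_of_nonneg_right hε) hp0
  rw [phi_eq_inv_rpow hm ht]
  generalize (1 + (t ^ (2 * m))⁻¹) ^ ((1 : ℝ) / (2 * m)) = y at bernoulli hone ⊢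
  calc 1 - y⁻¹ = (y - 1) * y⁻¹ := by field_simp
    _ ≤ y - 1 := mul_le_of_le_one_right (by linarith) (inv_le_one_of_one_le₀ hone)
    _ ≤ 1 / (2 * m) * (t ^ (2 * m))⁻¹ := by linarith
    _ = 1 / (2 * m * t ^ (2 * m)) := by field_simp

lemma tendsto_phi_atTop (hm : 1 ≤ m) : Tendsto (phi m) atTop (nhds 1) := by
  have hlow : Tendsto (fun t : ℝ => 1 - 1 / (2 * m * t ^ (2 * m))) atTop (nhds 1) := by
    have hm0 : (0 : ℝ) < 2 * m := by positivity
    simpa using tendsto_const_nhds.sub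
      ((tendsto_pow_atTop (by omega)).const_mul_atTop hm0).inv_tendsto_atTop
  refine tendsto_of_tendsto_of_tendsto_of_le_of_le' hlow tendsto_const_nhds ?_
    (Eventually.of_forall (phi_le_one hm))
  filter_upwards [eventually_gt_atTop 0] with t ht
  linarith [one_sub_phi_le hm ht]

lemma tendsto_phi_atBot (hm : 1 ≤ m) : Tendsto (phi m) atBot (nhds (-1)) := by
  have h := ((tendsto_phi_atTop hm).comp tendsto_neg_atBot_atTop).neg
  refine h.congr fun x => ?_
  simp [phi_neg]

lemma Phi_nonneg (hm : 1 ≤ m) (x : ℝ) : 0 ≤ Phi m x := by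
  rw [Phi, sub_div, sub_nonneg]
  gcongr
  exact phi_monotone hm (by linarith)

lemma Phi_neg (m : ℕ) (x : ℝ) : Phi m (-x) = Phi m x := by
  rw [Phi, Phi, show -x + 1 = -(x - 1) by ring, show -x - 1 = -(x + 1) by ring, phi_neg, phi_neg]
  ring

lemma sum_range_Phi (m : ℕ) (c : ℝ) (N : ℕ) :
    ∑ j ∈ Finset.range N, Phi m (c - j) =
      (phi m (c + 1) + phi m c - phi m (c - N + 1) - phi m (c - N)) / 4 := by
  induction N with
  | zero => simp
  | succ N ih =>
    rw [Finset.sum_range_succ, ih, Phi, Nat.cast_succ, show c - (N + 1) + 1 = c - N by ring,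
      show c - N - 1 = c - (N + 1) by ring]
    ring

lemma hasSum_Phi_nat (hm : 1 ≤ m) (c : ℝ) :
    HasSum (fun j : ℕ => Phi m (c - j)) ((2 + phi m c + phi m (c + 1)) / 4) := by
  rw [hasSum_iff_tendsto_nat_of_nonneg (fun j => Phi_nonneg hm _)]
  have hc : Tendsto (fun N : ℕ => c - N) atTop atBot :=
    tendsto_atBot_add_const_left _ c (tendsto_neg_atTop_atBot.comp tendsto_natCast_atTop_atTop)
  have hc1 : Tendsto (fun N : ℕ => c - N + 1) atTop atBot := tendsto_atBot_add_const_right _ 1 hc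
  have h := ((tendsto_const_nhds (x := phi m (c + 1) + phi m c)).sub
    ((tendsto_phi_atBot hm).comp hc1)).sub ((tendsto_phi_atBot hm).comp hc) |>.div_const 4
  rw [show (2 + phi m c + phi m (c + 1)) / 4 = (phi m (c + 1) + phi m c - -1 - -1) / 4 by ring]
  exact h.congr fun N => (sum_range_Phi m c N).symm

lemma hasSum_Phi_int (hm : 1 ≤ m) (y : ℝ) : HasSum (fun k : ℤ => Phi m (y - k)) 1 := by
  have hnat : HasSum (fun n : ℕ => Phi m (y - ((n : ℤ) : ℝ)))
      ((2 + phi m y + phi m (y + 1)) / 4) := by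
    simpa only [Int.cast_natCast] using hasSum_Phi_nat hm y
  have hneg : HasSum (fun n : ℕ => Phi m (y - ((-(n + 1) : ℤ) : ℝ)))
      ((2 + phi m (-y - 1) + phi m (-y - 1 + 1)) / 4) := by
    convert hasSum_Phi_nat hm (-y - 1) using 1
    funext n
    rw [← Phi_neg]
    push_cast
    ring_nf
  convert HasSum.of_nat_of_neg_add_one (f := fun k : ℤ => Phi m (y - k)) hnat hneg using 1
  rw [show -y - 1 + 1 = -y by ring, show -y - 1 = -(y + 1) by ring, phi_neg, phi_neg]
  ring

lemma tsum_indicator_gt_Phi_le (hm : 1 ≤ m) (y t : ℝ) :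
    ∑' k : ℤ, {k : ℤ | t < k}.indicator (fun k : ℤ => Phi m (y - k)) k ≤
      (1 - phi m (t - y - 1)) / 2 := by
  set K : ℤ := ⌊t⌋ + 1
  have hK : ∀ k : ℤ, t < k ↔ K ≤ k := fun k => by rw [← Int.floor_lt]; omega
  have hsum : HasSum ({k : ℤ | t < k}.indicator fun k : ℤ => Phi m (y - k))
      ((2 + phi m (y - K) + phi m (y - K + 1)) / 4) := by
    have hinj : Function.Injective fun j : ℕ => K + j := fun a b h => by simpa using h
    rw [← hinj.hasSum_iff]
    · convert hasSum_Phi_nat hm (y - K) using 1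
      funext j
      rw [Function.comp_apply, Set.indicator_of_mem
        (show K + (j : ℤ) ∈ {k : ℤ | t < k} from (hK _).2 (by omega))]
      push_cast
      ring_nf
    · intro k hk
      refine Set.indicator_of_notMem (fun hk' => hk ⟨(k - K).toNat, ?_⟩) _
      have := (hK k).1 hk'
      simp only
      omega
  have hKt : t < K := (hK K).2 le_rfl
  have h1 : phi m (y - K + 1) ≤ -phi m (t - y - 1) := by
    rw [← phi_neg]; exact phi_monotone hm (by linarith)
  have h0 : phi m (y - K) ≤ phi m (y - K + 1) := phi_monotone hm (by linarith)
  rw [hsum.tsum_eq]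
  linarith

noncomputable def PhiTail (m : ℕ) (y s : ℝ) : ℤ → ℝ :=
  {k : ℤ | s < |y - k|}.indicator fun k => Phi m (y - k)

lemma tsum_PhiTail_le_one_sub_phi (hm : 1 ≤ m) (y : ℝ) {s : ℝ} (hs : 0 ≤ s) :
    ∑' k, PhiTail m y s k ≤ 1 - phi m (s - 1) := by
  have hsplit : {k : ℤ | s < |y - k|} = {k : ℤ | y + s < k} ∪ {k : ℤ | (k : ℝ) < y - s} := by
    ext k
    simp only [Set.mem_ofPred_eq, Set.mem_union, lt_abs]
    constructor <;> rintro (h | h) <;> [right; left; right; left] <;> linarith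
  have hdisj : Disjoint {k : ℤ | y + s < k} {k : ℤ | (k : ℝ) < y - s} :=
    Set.disjoint_left.2 fun k h1 h2 => by simp only [Set.mem_ofPred_eq] at h1 h2; linarith
  have hΦ := (hasSum_Phi_int hm y).summable
  have hleft : ∑' k : ℤ, {k : ℤ | (k : ℝ) < y - s}.indicator (fun k : ℤ => Phi m (y - k)) k =
      ∑' k : ℤ, {k : ℤ | s - y < k}.indicator (fun k : ℤ => Phi m (-y - k)) k := by
    rw [← (Equiv.neg ℤ).tsum_eq]
    congr 1
    funext k
    simp only [Set.indicator_apply, Set.mem_ofPred_eq, Equiv.neg_apply, Int.cast_neg]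
    rw [show -y - k = -(y - -k) by ring, Phi_neg]
    congr 1
    exact propext ⟨fun h => by linarith, fun h => by linarith⟩
  rw [PhiTail, hsplit, Set.indicator_union_of_disjoint hdisj,
    Summable.tsum_add (hΦ.indicator _) (hΦ.indicator _), hleft]
  have hr := tsum_indicator_gt_Phi_le hm y (y + s)
  have hl := tsum_indicator_gt_Phi_le hm (-y) (s - y)
  rw [show y + s - y - 1 = s - 1 by ring] at hr
  rw [show s - y - -y - 1 = s - 1 by ring] at hl
  linarith

lemma summable_PhiTail (hm : 1 ≤ m) (y s : ℝ) : Summable (PhiTail m y s) :=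
  (hasSum_Phi_int hm y).summable.indicator _

lemma tsum_PhiTail_le (hm : 1 ≤ m) (y : ℝ) {s : ℝ} (hs : 1 < s) :
    ∑' k, PhiTail m y s k ≤ 1 / (2 * m * (s - 1) ^ (2 * m)) :=
  (tsum_PhiTail_le_one_sub_phi hm y (by linarith)).trans (one_sub_phi_le hm (by linarith))

lemma tsum_PhiTail_two_mul_le (hm : 1 ≤ m) (y : ℝ) {s : ℝ} (hs : 1 < s) :
    ∑' k, PhiTail m y (2 * s) k ≤ 1 / (2 * m * (s - 1) ^ (2 * m)) / 4 := by
  have hpow : 4 * (s - 1) ^ (2 * m) ≤ (2 * s - 1) ^ (2 * m) :=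
    calc 4 * (s - 1) ^ (2 * m) ≤ 2 ^ (2 * m) * (s - 1) ^ (2 * m) := by
          gcongr
          calc (4 : ℝ) = 2 ^ 2 := by norm_num
            _ ≤ 2 ^ (2 * m) := pow_le_pow_right₀ one_le_two (by omega)
      _ ≤ (2 * s - 1) ^ (2 * m) := by
          rw [← mul_pow]; gcongr; linarith
  have hs1 : 0 < s - 1 := by linarith
  refine (tsum_PhiTail_le hm y (by linarith)).trans ?_
  rw [div_div]
  exact one_div_le_one_div_of_le (by positivity) (by nlinarith)

end Sigmoid

section ModulusOfContinuity

variable {X : Type*} [NormedAddCommGroup X] {f : ℝ → X} {B δ : ℝ}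

lemma norm_le_iSup_norm {ι : Type*} {g : ι → X} (hg : Bornology.IsBounded (Set.range g)) (i : ι) :
    ‖g i‖ ≤ ⨆ j, ‖g j‖ := by
  obtain ⟨C, hC⟩ := hg.exists_norm_le
  exact le_ciSup ⟨C, Set.forall_mem_range.2 fun j => hC _ (Set.mem_range_self j)⟩ i

lemma norm_sub_le_omega1 (hB : ∀ t, ‖f t‖ ≤ B) {a b : ℝ} (h : |a - b| ≤ δ) :
    ‖f a - f b‖ ≤ omega1 f Set.univ δ := by
  refine le_csSup ⟨2 * B, ?_⟩ ⟨a, trivial, b, trivial, h, rfl⟩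
  rintro r ⟨a, -, b, -, -, rfl⟩
  linarith [norm_sub_le (f a) (f b), hB a, hB b]

lemma omega1_le {c : ℝ} (hδ : 0 ≤ δ) (h : ∀ a b, |a - b| ≤ δ → ‖f a - f b‖ ≤ c) :
    omega1 f Set.univ δ ≤ c := by
  refine csSup_le ⟨_, 0, trivial, 0, trivial, by simpa using hδ, rfl⟩ ?_
  rintro r ⟨a, -, b, -, hab, rfl⟩
  exact h a b hab

lemma norm_sub_le_two_mul_omega1 (hB : ∀ t, ‖f t‖ ≤ B) {a b : ℝ} (h : |a - b| ≤ 2 * δ) :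
    ‖f a - f b‖ ≤ 2 * omega1 f Set.univ δ := by
  have hmid : |a - (a + b) / 2| ≤ δ ∧ |(a + b) / 2 - b| ≤ δ := by
    constructor <;> rw [abs_le] at h ⊢ <;> constructor <;> linarith
  calc ‖f a - f b‖ ≤ ‖f a - f ((a + b) / 2)‖ + ‖f ((a + b) / 2) - f b‖ :=
        norm_sub_le_norm_sub_add_norm_sub _ _ _
    _ ≤ 2 * omega1 f Set.univ δ := by
        linarith [norm_sub_le_omega1 hB hmid.1, norm_sub_le_omega1 hB hmid.2]

lemma norm_sub_le_omega1_add_ite (hB : ∀ t, ‖f t‖ ≤ B) (hδ : 0 ≤ δ) (a b : ℝ) :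
    ‖f a - f b‖ ≤ omega1 f Set.univ δ +
      (if δ < |a - b| then min (omega1 f Set.univ δ) B else 0) +
      (if 2 * δ < |a - b| then 2 * (B - min (omega1 f Set.univ δ) B) else 0) := by
  have h2B : ‖f a - f b‖ ≤ 2 * B := by linarith [norm_sub_le (f a) (f b), hB a, hB b]
  have hmin := min_le_left (omega1 f Set.univ δ) B
  split_ifs with h1 h2 h2
  · linarith
  · have := norm_sub_le_two_mul_omega1 hB (not_lt.1 h2)
    rw [add_zero, ← min_add_add_left, ← two_mul]
    exact le_min this (by linarith)
  · linarith
  · linarith [norm_sub_le_omega1 hB (not_lt.1 h1)]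

end ModulusOfContinuity

section QuasiInterpolation

variable {X : Type*} [NormedAddCommGroup X] [NormedSpace ℝ X] {f : ℝ → X} {B : ℝ} {m : ℕ}

lemma AnBar_sub_eq_tsum [CompleteSpace X] (hm : 1 ≤ m) (hB : ∀ t, ‖f t‖ ≤ B) (n : ℕ) (x : ℝ) :
    AnBar m n f x - f x = ∑' k : ℤ, Phi m (n * x - k) • (f (k / n) - f x) := by
  have hΦ := hasSum_Phi_int hm (n * x)
  have hsum : Summable fun k : ℤ => Phi m (n * x - k) • f (k / n) := by
    refine hΦ.summable.mul_right B |>.of_norm_bounded fun k => ?_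
    rw [norm_smul, Real.norm_of_nonneg (Phi_nonneg hm _)]
    exact mul_le_mul_of_nonneg_left (hB _) (Phi_nonneg hm _)
  simp only [smul_sub]
  rw [hsum.tsum_sub (hΦ.summable.smul_const _), hΦ.summable.tsum_smul_const, hΦ.tsum_eq,
    one_smul, AnBar]

lemma norm_Phi_smul_sub_le (hm : 1 ≤ m) (hB : ∀ t, ‖f t‖ ≤ B) {n : ℕ} (hn : (0 : ℝ) < n)
    {δ : ℝ} (hδ : 0 ≤ δ) (x : ℝ) (k : ℤ) :
    ‖Phi m (n * x - k) • (f (k / n) - f x)‖ ≤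
      omega1 f Set.univ δ * Phi m (n * x - k) +
        min (omega1 f Set.univ δ) B * PhiTail m (n * x) (n * δ) k +
        2 * (B - min (omega1 f Set.univ δ) B) * PhiTail m (n * x) (2 * (n * δ)) k := by
  have hscale : ∀ r : ℝ, r < |(k : ℝ) / n - x| ↔ n * r < |n * x - k| := fun r => by
    rw [show (k : ℝ) / n - x = -((n * x - k) / n) by field_simp; ring, abs_neg, abs_div,
      abs_of_pos hn, lt_div_iff₀ hn, mul_comm]
  have hΦ := Phi_nonneg hm (n * x - k)
  have h := mul_le_mul_of_nonneg_left (norm_sub_le_omega1_add_ite hB hδ (k / n) x) hΦ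
  rw [norm_smul, Real.norm_of_nonneg hΦ]
  simp only [PhiTail, Set.indicator_apply, Set.mem_ofPred_eq, hscale, mul_left_comm _ (2 : ℝ)]
    at h ⊢
  split_ifs at h ⊢ <;> linarith

lemma norm_AnBar_sub_le [CompleteSpace X] (hm : 1 ≤ m) (hB : ∀ t, ‖f t‖ ≤ B) {n : ℕ} {δ : ℝ}
    (hnδ : 1 < n * δ) (x : ℝ) :
    ‖AnBar m n f x - f x‖ ≤ omega1 f Set.univ δ + B / (2 * m * (n * δ - 1) ^ (2 * m)) := by
  have hn : (0 : ℝ) < n :=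
    (Nat.cast_nonneg n).lt_of_ne fun h => by rw [← h, zero_mul] at hnδ; linarith
  have hδ : 0 < δ := pos_of_mul_pos_right (by linarith) hn.le
  set ω := omega1 f Set.univ δ
  set a := min ω B
  set C := 1 / (2 * m * (n * δ - 1) ^ (2 * m))
  have hω : 0 ≤ ω := by simpa using norm_sub_le_omega1 hB (a := x) (b := x) (by simpa using hδ.le)
  have hB0 : 0 ≤ B := (norm_nonneg _).trans (hB x)
  have ha0 : 0 ≤ a := le_min hω hB0
  have haB : 0 ≤ B - a := sub_nonneg.2 (min_le_right ω B)
  have hC : 0 ≤ C := by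
    have : 0 < n * δ - 1 := by linarith
    positivity
  have hΦ := hasSum_Phi_int hm (n * x)
  have hmajorant :=
    ((hΦ.mul_left ω).add ((summable_PhiTail hm (n * x) (n * δ)).hasSum.mul_left a)).add
      ((summable_PhiTail hm (n * x) (2 * (n * δ))).hasSum.mul_left (2 * (B - a)))
  calc ‖AnBar m n f x - f x‖
      = ‖∑' k : ℤ, Phi m (n * x - k) • (f (k / n) - f x)‖ := by rw [AnBar_sub_eq_tsum hm hB]
    _ ≤ ω * 1 + a * ∑' k, PhiTail m (n * x) (n * δ) k +
          2 * (B - a) * ∑' k, PhiTail m (n * x) (2 * (n * δ)) k :=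
        tsum_of_norm_bounded hmajorant (norm_Phi_smul_sub_le hm hB hn hδ.le x)
    _ ≤ ω * 1 + a * C + 2 * (B - a) * (C / 4) := by
        gcongr
        exacts [tsum_PhiTail_le hm _ hnδ, tsum_PhiTail_two_mul_le hm _ hnδ]
    _ ≤ ω + B * C := by nlinarith
    _ = ω + B / (2 * m * (n * δ - 1) ^ (2 * m)) := by rw [mul_one_div]

lemma tendstoUniformly_AnBar [CompleteSpace X] (hm : 1 ≤ m)
    (hfb : Bornology.IsBounded (Set.range f)) (huc : UniformContinuous f) :
    TendstoUniformly (fun (N : ℕ) (x : ℝ) => AnBar m N f x) f atTop := by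
  rw [Metric.tendstoUniformly_iff]
  intro ε hε
  obtain ⟨δ, hδ, hfδ⟩ := Metric.uniformContinuous_iff.1 huc _ (half_pos hε)
  have hω : omega1 f Set.univ (δ / 2) ≤ ε / 2 := omega1_le (by linarith) fun a b hab => by
    rw [← dist_eq_norm]
    exact (hfδ (by rw [Real.dist_eq]; linarith)).le
  have hgrow : Tendsto (fun N : ℕ => N * (δ / 2)) atTop atTop :=
    tendsto_natCast_atTop_atTop.atTop_mul_const (half_pos hδ)
  have hm0 : (0 : ℝ) < 2 * m := by positivity
  have hrem : Tendsto (fun N : ℕ => (⨆ y, ‖f y‖) / (2 * m * (N * (δ / 2) - 1) ^ (2 * m)))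
      atTop (nhds 0) :=
    tendsto_const_nhds.div_atTop <| Tendsto.const_mul_atTop hm0 <|
      (tendsto_pow_atTop (by omega)).comp (tendsto_atTop_add_const_right _ (-1) hgrow)
  filter_upwards [hrem.eventually (gt_mem_nhds (half_pos hε)), hgrow.eventually_gt_atTop 1]
    with N hN hNδ x
  rw [dist_comm, dist_eq_norm]
  linarith [norm_AnBar_sub_le hm (norm_le_iSup_norm hfb) hNδ x]

end QuasiInterpolation

theorem AnBar_approx_general (X : Type*) [NormedAddCommGroup X] [NormedSpace ℝ X]
    [CompleteSpace X] (f : ℝ → X)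
    (hfb : Bornology.IsBounded (Set.range f)) (m : ℕ) (hm : 1 ≤ m)
    (α : ℝ) (hα1 : α < 1) (n : ℕ) (hn : 2 < (n : ℝ) ^ (1 - α)) :
    (∀ x : ℝ,
      ‖AnBar m n f x - f x‖ ≤
        omega1 f Set.univ (1 / (n : ℝ) ^ α) +
          (⨆ y : ℝ, ‖f y‖) / (2 * m * ((n : ℝ) ^ (1 - α) - 2) ^ (2 * m))) ∧
    (⨆ x : ℝ, ‖AnBar m n f x - f x‖) ≤
        omega1 f Set.univ (1 / (n : ℝ) ^ α) +
          (⨆ y : ℝ, ‖f y‖) / (2 * m * ((n : ℝ) ^ (1 - α) - 2) ^ (2 * m)) ∧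
    (UniformContinuous f →
      TendstoUniformly (fun (N : ℕ) (x : ℝ) => AnBar m N f x) f atTop) := by
  have hn0 : (0 : ℝ) < n := by
    refine (Nat.cast_nonneg n).lt_of_ne fun h => ?_
    rw [← h, zero_rpow (by linarith)] at hn
    linarith
  have hscale : n * (1 / (n : ℝ) ^ α) = (n : ℝ) ^ (1 - α) := by
    rw [rpow_sub hn0, rpow_one, mul_one_div]
  have hB0 : 0 ≤ ⨆ y : ℝ, ‖f y‖ := Real.iSup_nonneg fun y => norm_nonneg _
  have hbound : ∀ x : ℝ, ‖AnBar m n f x - f x‖ ≤ omega1 f Set.univ (1 / (n : ℝ) ^ α) +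
      (⨆ y : ℝ, ‖f y‖) / (2 * m * ((n : ℝ) ^ (1 - α) - 2) ^ (2 * m)) := fun x => by
    have h := norm_AnBar_sub_le hm (norm_le_iSup_norm hfb) (by rw [hscale]; linarith) x
    rw [hscale] at h
    refine h.trans (add_le_add_right (div_le_div_of_nonneg_left hB0 ?_ ?_) _)
    · have : 0 < (n : ℝ) ^ (1 - α) - 2 := by linarith
      positivity
    · gcongr; linarith
  exact ⟨hbound, ciSup_le hbound, tendstoUniformly_AnBar hm hfb⟩

theorem AnBar_approx (X : Type*) [NormedAddCommGroup X] [NormedSpace ℝ X]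
    [CompleteSpace X] (f : ℝ → X) (hf : Continuous f)
    (hfb : Bornology.IsBounded (Set.range f)) (m : ℕ) (hm : 1 ≤ m)
    (α : ℝ) (hα0 : 0 < α) (hα1 : α < 1) (n : ℕ) (hn : 2 < (n : ℝ) ^ (1 - α)) :
    (∀ x : ℝ,
      ‖AnBar m n f x - f x‖ ≤
        omega1 f Set.univ (1 / (n : ℝ) ^ α) +
          (⨆ y : ℝ, ‖f y‖) / (2 * m * ((n : ℝ) ^ (1 - α) - 2) ^ (2 * m))) ∧
    (⨆ x : ℝ, ‖AnBar m n f x - f x‖) ≤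
        omega1 f Set.univ (1 / (n : ℝ) ^ α) +
          (⨆ y : ℝ, ‖f y‖) / (2 * m * ((n : ℝ) ^ (1 - α) - 2) ^ (2 * m)) ∧
    (UniformContinuous f →
      TendstoUniformly (fun (N : ℕ) (x : ℝ) => AnBar m N f x) f atTop) :=
  AnBar_approx_general X f hfb m hm α hα1 n hn
end
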